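/- Suppose the random vectors Z_n have densities p_n and converge weakly in distribution to a standard normal random vector Z in ℝ^d. If ‖p_n‖_{L²(ℝ^d)} → ‖φ‖_{L²(ℝ^d)} as n → ∞, then ‖p_n − φ‖_{L²(ℝ^d)} → 0 as n → ∞. -/

import Mathlib

/-!
Work in `L²`. Testing the weak convergence against the bounded continuous function `φ` gives
`⟪p n⁺, φ⟫ → ‖φ‖²`; only the positive part appears because the law of `Z n` only sees
`max (p n) 0`. Since `‖p n⁺‖ ≤ ‖p n‖ → ‖φ‖`, expanding `‖p n⁺ - φ‖²` shows `p n⁺ → φ`, and then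
`‖p n - p n⁺‖² = ‖p n‖² - ‖p n⁺‖² → 0` because `p n⁺` and `p n - p n⁺` are orthogonal.
-/

open MeasureTheory Filter Real
open scoped BoundedContinuousFunction Topology RealInnerProductSpace

theorem tendsto_zero_of_tendsto_norm_sq {E ι : Type*} [SeminormedAddCommGroup E] {l : Filter ι}
    {v : ι → E} (h : Tendsto (fun i => ‖v i‖ ^ 2) l (𝓝 0)) : Tendsto v l (𝓝 0) := by
  rw [tendsto_zero_iff_norm_tendsto_zero]
  simpa [Real.sqrt_sq (norm_nonneg _)] using h.sqrt

section InnerProductSpace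

variable {E ι : Type*} [NormedAddCommGroup E] [InnerProductSpace ℝ E] {l : Filter ι}

theorem tendsto_of_tendsto_inner_of_norm_le {x : ι → E} {y : E} {a : ι → ℝ}
    (hinner : Tendsto (fun i => ⟪x i, y⟫) l (𝓝 (‖y‖ ^ 2)))
    (hle : ∀ i, ‖x i‖ ≤ a i) (ha : Tendsto a l (𝓝 ‖y‖)) : Tendsto x l (𝓝 y) := by
  rw [← tendsto_sub_nhds_zero_iff]
  refine tendsto_zero_of_tendsto_norm_sq (squeeze_zero (fun _ => sq_nonneg _) (fun i => ?_)
    (g := fun i => a i ^ 2 - 2 * ⟪x i, y⟫ + ‖y‖ ^ 2) ?_)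
  · rw [norm_sub_sq_real]
    gcongr
    exact hle i
  · convert ((ha.pow 2).sub (hinner.const_mul 2)).add_const (‖y‖ ^ 2) using 2
    ring

theorem tendsto_of_inner_sub_eq_zero {x u : ι → E} {y : E}
    (horth : ∀ i, ⟪u i, x i - u i⟫ = 0)
    (hinner : Tendsto (fun i => ⟪u i, y⟫) l (𝓝 (‖y‖ ^ 2)))
    (hnorm : Tendsto (fun i => ‖x i‖) l (𝓝 ‖y‖)) : Tendsto x l (𝓝 y) := by
  have hpyth : ∀ i, ‖x i‖ ^ 2 = ‖u i‖ ^ 2 + ‖x i - u i‖ ^ 2 := fun i => by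
    rw [← add_sub_cancel (u i) (x i), norm_add_sq_real, horth i, add_sub_cancel_left]
    ring
  have hle : ∀ i, ‖u i‖ ≤ ‖x i‖ := fun i =>
    (pow_le_pow_iff_left₀ (norm_nonneg _) (norm_nonneg _) two_ne_zero).1
      (hpyth i ▸ le_add_of_nonneg_right (sq_nonneg _))
  have hu : Tendsto u l (𝓝 y) := tendsto_of_tendsto_inner_of_norm_le hinner hle hnorm
  have hsub : Tendsto (fun i => x i - u i) l (𝓝 0) := by
    refine tendsto_zero_of_tendsto_norm_sq ?_
    convert (hnorm.pow 2).sub (hu.norm.pow 2) using 2 with i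
    · linarith [hpyth i]
    · ring
  simpa using hu.add hsub

end InnerProductSpace

theorem integral_comp_eq_integral_max_zero_mul {Ω α : Type*} [MeasurableSpace Ω]
    [MeasurableSpace α] {μ : Measure Ω} {ν : Measure α} {X : Ω → α} {f g : α → ℝ}
    (hX : AEMeasurable X μ) (hf : AEMeasurable f ν)
    (hmap : μ.map X = ν.withDensity fun x => ENNReal.ofReal (f x))
    (hg : AEStronglyMeasurable g (μ.map X)) :
    ∫ ω, g (X ω) ∂μ = ∫ x, max (f x) 0 * g x ∂ν := by
  rw [← integral_map hX hg, hmap]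
  exact (integral_withDensity_eq_integral_smul₀ hf.real_toNNReal g).trans
    (integral_congr_ae (Eventually.of_forall fun x => by
      simp [NNReal.smul_def, Real.coe_toNNReal']))

namespace MeasureTheory

variable {α : Type*} [MeasurableSpace α] {μ : Measure α}

theorem L2.real_inner_def (f g : α →₂[μ] ℝ) : ⟪f, g⟫ = ∫ x, f x * g x ∂μ := by
  simp [inner_def, mul_comm]

theorem L2.inner_posPart_sub_posPart (f : α →₂[μ] ℝ) :
    ⟪Lp.posPart f, f - Lp.posPart f⟫ = 0 := by
  rw [real_inner_def]
  refine integral_eq_zero_of_ae ?_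
  filter_upwards [Lp.coeFn_posPart f, Lp.coeFn_sub f (Lp.posPart f)] with x hpos hsub
  rw [hsub, Pi.sub_apply, hpos]
  rcases le_total (f x) 0 with h | h <;> simp [h]

theorem MemLp.inner_toLp_toLp {f g : α → ℝ} (hf : MemLp f 2 μ) (hg : MemLp g 2 μ) :
    ⟪hf.toLp f, hg.toLp g⟫ = ∫ x, f x * g x ∂μ := by
  rw [L2.real_inner_def]
  refine integral_congr_ae ?_
  filter_upwards [hf.coeFn_toLp, hg.coeFn_toLp] with x hfx hgx
  rw [hfx, hgx]

theorem MemLp.inner_posPart_toLp_toLp {f g : α → ℝ} (hf : MemLp f 2 μ) (hg : MemLp g 2 μ) :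
    ⟪Lp.posPart (hf.toLp f), hg.toLp g⟫ = ∫ x, max (f x) 0 * g x ∂μ := by
  rw [L2.real_inner_def]
  refine integral_congr_ae ?_
  filter_upwards [Lp.coeFn_posPart (hf.toLp f), hf.coeFn_toLp, hg.coeFn_toLp] with x hpos hfx hgx
  rw [hpos, hfx, hgx]

end MeasureTheory

section Gaussian

variable {V : Type*} [NormedAddCommGroup V] [InnerProductSpace ℝ V] [FiniteDimensional ℝ V]
  [MeasurableSpace V] [BorelSpace V]

theorem integrable_exp_neg_mul_sq_norm {b : ℝ} (hb : 0 < b) :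
    Integrable (fun v : V => rexp (-b * ‖v‖ ^ 2)) := by
  refine (GaussianFourier.integrable_cexp_neg_mul_sq_norm_add (V := V) (b := b)
    (by simpa using hb) 0 0).norm.congr (Eventually.of_forall fun v => ?_)
  simp [Complex.norm_exp, ← Complex.ofReal_pow]

theorem memLp_two_const_mul_exp_neg_sq_norm_div_two (c : ℝ) :
    MemLp (fun x : V => c * rexp (-‖x‖ ^ 2 / 2)) 2 := by
  refine (memLp_two_iff_integrable_sq (by fun_prop)).2 <|
    ((integrable_exp_neg_mul_sq_norm one_pos).const_mul (c ^ 2)).congr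
      (Eventually.of_forall fun x => ?_)
  dsimp only
  rw [mul_pow, ← Real.exp_nat_mul]
  ring_nf

end Gaussian

theorem L2_convergence_of_weak_convergence_and_norm_convergence_general
    {Ω : Type*} [MeasurableSpace Ω] (μ : Measure Ω)
    {d : ℕ}
    (Z : ℕ → Ω → EuclideanSpace ℝ (Fin d)) (hZmeas : ∀ n, Measurable (Z n))
    (p : ℕ → EuclideanSpace ℝ (Fin d) → ℝ)
    (hpL2 : ∀ n, MemLp (p n) 2 volume)
    (hdens : ∀ n, Measure.map (Z n) μ
      = volume.withDensity (fun x => ENNReal.ofReal (p n x)))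
    (φ : EuclideanSpace ℝ (Fin d) → ℝ)
    (hφ : ∀ x, φ x = ((Real.sqrt (2 * π)) ^ d)⁻¹ * Real.exp (-‖x‖ ^ 2 / 2))
    (hweak : ∀ g : EuclideanSpace ℝ (Fin d) →ᵇ ℝ,
      Tendsto (fun n => ∫ ω, g (Z n ω) ∂μ) atTop (nhds (∫ x, g x * φ x)))
    (hnorm : Tendsto (fun n => eLpNorm (p n) 2 volume) atTop
      (nhds (eLpNorm φ 2 volume))) :
    Tendsto (fun n => eLpNorm (fun x => p n x - φ x) 2 volume) atTop (nhds 0) := by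
  set c := ((Real.sqrt (2 * π)) ^ d)⁻¹
  have hφcont : Continuous φ := funext hφ ▸ by fun_prop
  have hφbdd : ∀ x, ‖φ x‖ ≤ |c| := fun x => by
    rw [hφ, norm_mul, Real.norm_eq_abs, Real.norm_of_nonneg (Real.exp_nonneg _)]
    exact mul_le_of_le_one_right (abs_nonneg c)
      (Real.exp_le_one_iff.2 (by linarith [sq_nonneg ‖x‖]))
  have hφL2 : MemLp φ 2 volume := funext hφ ▸ memLp_two_const_mul_exp_neg_sq_norm_div_two c
  set Φ := hφL2.toLp φ
  set P := fun n => (hpL2 n).toLp (p n)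
  have hP : Tendsto (fun n => ‖P n‖) atTop (𝓝 ‖Φ‖) := by
    simpa only [P, Φ, Lp.norm_toLp, Function.comp_def] using
      (ENNReal.tendsto_toReal hφL2.eLpNorm_ne_top).comp hnorm
  have hposP : Tendsto (fun n => ⟪Lp.posPart (P n), Φ⟫) atTop (𝓝 (‖Φ‖ ^ 2)) := by
    have hterm : ∀ n, ∫ ω, φ (Z n ω) ∂μ = ⟪Lp.posPart (P n), Φ⟫ := fun n => by
      rw [integral_comp_eq_integral_max_zero_mul (hZmeas n).aemeasurable
        (hpL2 n).aestronglyMeasurable.aemeasurable (hdens n) hφcont.aestronglyMeasurable,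
        MemLp.inner_posPart_toLp_toLp]
    rw [← real_inner_self_eq_norm_sq, MemLp.inner_toLp_toLp]
    exact (hweak (.ofNormedAddCommGroup φ hφcont _ hφbdd)).congr hterm
  refine (Lp.tendsto_Lp_iff_tendsto_eLpNorm'' p hpL2 _ hφL2).1 ?_
  exact tendsto_of_inner_sub_eq_zero (fun n => L2.inner_posPart_sub_posPart (P n)) hposP hP

/-- **Remark preceding the proof of Theorem 2.1 (equivalence (2.6) ⟹ (2.1)).**
Suppose random vectors `Z n` in `ℝ^d` have densities `p n ∈ L²` and converge
weakly in distribution to a standard normal random vector.  If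
`‖p n‖_{L²} → ‖φ‖_{L²}`, then `‖p n − φ‖_{L²} → 0`. -/
theorem L2_convergence_of_weak_convergence_and_norm_convergence
    {Ω : Type*} [MeasurableSpace Ω] (μ : Measure Ω) [IsProbabilityMeasure μ]
    {d : ℕ}
    (Z : ℕ → Ω → EuclideanSpace ℝ (Fin d)) (hZmeas : ∀ n, Measurable (Z n))
    (p : ℕ → EuclideanSpace ℝ (Fin d) → ℝ)
    (hpL2 : ∀ n, MemLp (p n) 2 volume)
    (hdens : ∀ n, Measure.map (Z n) μ
      = volume.withDensity (fun x => ENNReal.ofReal (p n x)))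
    (φ : EuclideanSpace ℝ (Fin d) → ℝ)
    (hφ : ∀ x, φ x = ((Real.sqrt (2 * π)) ^ d)⁻¹ * Real.exp (-‖x‖ ^ 2 / 2))
    (hweak : ∀ g : EuclideanSpace ℝ (Fin d) →ᵇ ℝ,
      Tendsto (fun n => ∫ ω, g (Z n ω) ∂μ) atTop (nhds (∫ x, g x * φ x)))
    (hnorm : Tendsto (fun n => eLpNorm (p n) 2 volume) atTop
      (nhds (eLpNorm φ 2 volume))) :
    Tendsto (fun n => eLpNorm (fun x => p n x - φ x) 2 volume) atTop (nhds 0) :=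
  L2_convergence_of_weak_convergence_and_norm_convergence_general μ Z hZmeas p hpL2 hdens φ hφ hweak
    hnorm
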